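/- Let u be a factor of x of length n ≥ 1, and let M₂(n) (resp. m₂(n)) denote the maximum (resp. minimum) number of occurrences of the letter 2 in a factor of x of length n. Then |u|₂ = M₂(n) if and only if |φ(u)|₀ = M₀(2n), and |u|₂ = m₂(n) if and only if |φ(u)|₀ = m₀(2n). -/

import Mathlib

/-- The 2-kernel of a sequence `s : ℕ → ℤ`. -/
def kernel2 (s : ℕ → ℤ) : Set (ℕ → ℤ) :=
  {t | ∃ i j : ℕ, j < 2 ^ i ∧ t = fun n => s (2 ^ i * n + j)}

/-- A sequence is 2-regular if the ℤ-module spanned by its 2-kernel is finitely generated. -/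
def IsTwoRegular (s : ℕ → ℤ) : Prop :=
  (Submodule.span ℤ (kernel2 s)).FG

/-- A sequence is 2-automatic if its 2-kernel is finite. -/
def IsTwoAutomatic (s : ℕ → ℤ) : Prop :=
  (kernel2 s).Finite

/-- The period-doubling word, fixed point (starting with 0) of 0 ↦ 01, 1 ↦ 00:
its `n`-th letter is the parity of the 2-adic valuation of `n+1`. -/
def pd (n : ℕ) : ℕ := (n + 1).factorization 2 % 2

/-- The Thue–Morse word, fixed point (starting with 0) of 0 ↦ 01, 1 ↦ 10:
its `n`-th letter is the parity of the binary digit sum of `n`. -/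
def tm (n : ℕ) : ℕ := (Nat.digits 2 n).sum % 2

/-- The 2-block coding `x = block(p, 2)` of the period-doubling word. -/
def xw (n : ℕ) : ℕ := 2 * pd n + pd (n + 1)

/-- The 2-block coding `y = block(t, 2)` of the Thue–Morse word. -/
def yw (n : ℕ) : ℕ := 2 * tm n + tm (n + 1)

/-- The factor of an infinite word `w` of length `len` occurring at position `i`. -/
def factorAt (w : ℕ → ℕ) (i len : ℕ) : List ℕ :=
  (List.range len).map fun k => w (i + k)

/-- `u` is a factor of the infinite word `w`. -/
def IsFactor (w : ℕ → ℕ) (u : List ℕ) : Prop :=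
  ∃ i, u = factorAt w i u.length

/-- Maximal number of 0's in a factor of `x` of length `n`. -/
noncomputable def M0 (n : ℕ) : ℕ := sSup {k | ∃ i, (factorAt xw i n).count 0 = k}

/-- Minimal number of 0's in a factor of `x` of length `n`. -/
noncomputable def m0 (n : ℕ) : ℕ := sInf {k | ∃ i, (factorAt xw i n).count 0 = k}

noncomputable def D0 (n : ℕ) : ℕ := M0 n - m0 n

/-- Maximal number of 2's in a factor of `x` of length `n`. -/
noncomputable def M2c (n : ℕ) : ℕ := sSup {k | ∃ i, (factorAt xw i n).count 2 = k}

/-- Minimal number of 2's in a factor of `x` of length `n`. -/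
noncomputable def m2c (n : ℕ) : ℕ := sInf {k | ∃ i, (factorAt xw i n).count 2 = k}

/-- The max-jump function for `M0`. -/
noncomputable def JM0 : ℕ → ℕ
  | 0 => 0
  | n + 1 => if M0 n < M0 (n + 1) then 1 else 0

/-- The min-jump function for `m0`. -/
noncomputable def jm0 (n : ℕ) : ℕ := if m0 n < m0 (n + 1) then 1 else 0

/-- Maximal total number of 1's and 2's in a factor of `y` of length `n`. -/
noncomputable def M12 (n : ℕ) : ℕ :=
  sSup {k | ∃ i, (factorAt yw i n).count 1 + (factorAt yw i n).count 2 = k}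

/-- Minimal total number of 1's and 2's in a factor of `y` of length `n`. -/
noncomputable def m12 (n : ℕ) : ℕ :=
  sInf {k | ∃ i, (factorAt yw i n).count 1 + (factorAt yw i n).count 2 = k}

noncomputable def D12 (n : ℕ) : ℕ := M12 n - m12 n

/-- Maximal total number of 0's and 3's in a factor of `y` of length `n`. -/
noncomputable def M03 (n : ℕ) : ℕ :=
  sSup {k | ∃ i, (factorAt yw i n).count 0 + (factorAt yw i n).count 3 = k}

/-- Minimal total number of 0's and 3's in a factor of `y` of length `n`. -/
noncomputable def m03 (n : ℕ) : ℕ :=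
  sInf {k | ∃ i, (factorAt yw i n).count 0 + (factorAt yw i n).count 3 = k}

/-- The max-jump function for `M03`. -/
noncomputable def JM03 (n : ℕ) : ℕ := if M03 (n - 1) < M03 n then 1 else 0

/-- The min-jump function for `m03`. -/
noncomputable def jm03 (n : ℕ) : ℕ := if m03 n < m03 (n + 1) then 1 else 0

/-- Abelian complexity: the number of abelian equivalence classes (i.e. distinct
multisets of letters) of factors of `w` of length `n`. -/
noncomputable def abComplexity (w : ℕ → ℕ) (n : ℕ) : ℕ :=
  Set.ncard {m : Multiset ℕ | ∃ i, (↑(factorAt w i n) : Multiset ℕ) = m}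

/-- The number of occurrences of `v` as a factor of `u`. -/
def countFactor (u v : List ℕ) : ℕ :=
  ((List.range (u.length + 1 - v.length)).filter
    fun i => decide ((u.drop i).take v.length = v)).length

/-- 2-abelian complexity: the number of 2-abelian equivalence classes of factors of `w`
of length `n`, where two words are 2-abelian equivalent when every word of length at most 2
occurs equally often in both. -/
noncomputable def abel2Complexity (w : ℕ → ℕ) (n : ℕ) : ℕ :=
  Set.ncard {f : List ℕ → ℕ |
    ∃ i, f = fun v => if v.length ≤ 2 then countFactor (factorAt w i n) v else 0}

/-- The morphism φ : 0 ↦ 12, 1 ↦ 12, 2 ↦ 00. -/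
def phiL : ℕ → List ℕ
  | 0 => [1, 2]
  | 1 => [1, 2]
  | 2 => [0, 0]
  | _ => []

/-- The morphism τ : 0 ↦ 0, 1 ↦ 2, 2 ↦ 1. -/
def tauL : ℕ → ℕ
  | 1 => 2
  | 2 => 1
  | n => n

/-!
Since `x` is the fixed point of `φ` and `φ(2) = 00` while `φ(0) = φ(1) = 12`, the letter of `x`
at position `m` is `0` exactly when the letter at position `⌊m/2⌋` is `2`. Hence a factor of
length `2n` starting at `i` contains as many `0`s as the two factors of length `n` starting at
`⌊i/2⌋` and `⌊(i+1)/2⌋` together contain `2`s; these coincide when `i` is even. This gives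
`M₀(2n) = 2 M₂(n)` and `m₀(2n) = 2 m₂(n)`, and the theorem follows from `|φ(u)|₀ = 2 |u|₂`.
-/

section Counts

variable (w : ℕ → ℕ) (c n : ℕ)

lemma factorAt_succ (i : ℕ) : factorAt w i (n + 1) = factorAt w i n ++ [w (i + n)] := by
  simp [factorAt, List.range_succ]

lemma bddAbove_counts : BddAbove {k | ∃ i, (factorAt w i n).count c = k} := by
  refine ⟨n, ?_⟩
  rintro _ ⟨i, rfl⟩
  simpa [factorAt] using List.count_le_length (a := c) (l := factorAt w i n)

lemma counts_nonempty : {k | ∃ i, (factorAt w i n).count c = k}.Nonempty :=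
  ⟨_, 0, rfl⟩

end Counts

lemma count_factorAt_two_mul {w v : ℕ → ℕ} {a b : ℕ} (hwv : ∀ m, w m = a ↔ v (m / 2) = b)
    (i n : ℕ) :
    (factorAt w i (2 * n)).count a =
      (factorAt v (i / 2) n).count b + (factorAt v ((i + 1) / 2) n).count b := by
  induction n with
  | zero => simp [factorAt]
  | succ n ih =>
    rw [show 2 * (n + 1) = 2 * n + 1 + 1 by ring]
    simp only [factorAt_succ, List.count_append, List.count_singleton, beq_iff_eq, hwv, ih]
    rw [show (i + 2 * n) / 2 = i / 2 + n by omega,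
      show (i + (2 * n + 1)) / 2 = (i + 1) / 2 + n by omega]
    split_ifs <;> omega

lemma pd_le_one (k : ℕ) : pd k ≤ 1 := by
  unfold pd
  omega

lemma pd_two_mul (k : ℕ) : pd (2 * k) = 0 := by
  unfold pd
  rw [Nat.factorization_eq_zero_of_not_dvd (by omega)]

lemma pd_two_mul_add_one (k : ℕ) : pd (2 * k + 1) = (pd k + 1) % 2 := by
  unfold pd
  rw [show 2 * k + 1 + 1 = 2 * (k + 1) by ring, Nat.factorization_mul (by norm_num) (by omega)]
  simp only [Finsupp.coe_add, Pi.add_apply, Nat.Prime.factorization_self Nat.prime_two,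
    Nat.mod_add_mod]
  omega

lemma xw_eq_two_iff (k : ℕ) : xw k = 2 ↔ pd k = 1 := by
  have := pd_le_one (k + 1)
  unfold xw
  refine ⟨fun h => by omega, fun h => ?_⟩
  obtain ⟨j, rfl | rfl⟩ := Nat.even_or_odd' k
  · rw [pd_two_mul] at h
    omega
  · rw [h, show 2 * j + 1 + 1 = 2 * (j + 1) by ring, pd_two_mul]

lemma xw_eq_zero_iff (m : ℕ) : xw m = 0 ↔ xw (m / 2) = 2 := by
  rw [xw_eq_two_iff]
  obtain ⟨k, rfl | rfl⟩ := Nat.even_or_odd' m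
  all_goals have := pd_le_one k
  · rw [show 2 * k / 2 = k by omega]
    unfold xw
    rw [pd_two_mul, pd_two_mul_add_one]
    omega
  · rw [show (2 * k + 1) / 2 = k by omega]
    unfold xw
    rw [pd_two_mul_add_one, show 2 * k + 1 + 1 = 2 * (k + 1) by ring, pd_two_mul]
    omega

lemma count_flatMap_phiL_zero (u : List ℕ) : (u.flatMap phiL).count 0 = 2 * u.count 2 := by
  induction u with
  | nil => rfl
  | cons a u ih =>
    rw [List.flatMap_cons, List.count_append, ih, List.count_cons, mul_add, add_comm]
    congr 1
    rcases a with _ | _ | _ | a <;> rfl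

lemma count_zero_factorAt_two_mul (i n : ℕ) :
    (factorAt xw i (2 * n)).count 0 =
      (factorAt xw (i / 2) n).count 2 + (factorAt xw ((i + 1) / 2) n).count 2 :=
  count_factorAt_two_mul xw_eq_zero_iff i n

lemma count_zero_factorAt_two_mul_two_mul (j n : ℕ) :
    (factorAt xw (2 * j) (2 * n)).count 0 = 2 * (factorAt xw j n).count 2 := by
  rw [count_zero_factorAt_two_mul, show (2 * j + 1) / 2 = j by omega,
    Nat.mul_div_cancel_left _ two_pos, two_mul]

lemma M0_two_mul (n : ℕ) : M0 (2 * n) = 2 * M2c n := by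
  have le_M2c (i : ℕ) : (factorAt xw i n).count 2 ≤ M2c n :=
    le_csSup (bddAbove_counts xw 2 n) ⟨i, rfl⟩
  apply le_antisymm
  · refine csSup_le (counts_nonempty xw 0 (2 * n)) ?_
    rintro _ ⟨i, rfl⟩
    rw [count_zero_factorAt_two_mul]
    have := le_M2c (i / 2)
    have := le_M2c ((i + 1) / 2)
    omega
  · obtain ⟨j, hj⟩ := Nat.sSup_mem (counts_nonempty xw 2 n) (bddAbove_counts xw 2 n)
    rw [M2c, ← hj, ← count_zero_factorAt_two_mul_two_mul]
    exact le_csSup (bddAbove_counts xw 0 (2 * n)) ⟨2 * j, rfl⟩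

lemma m0_two_mul (n : ℕ) : m0 (2 * n) = 2 * m2c n := by
  have m2c_le (i : ℕ) : m2c n ≤ (factorAt xw i n).count 2 := Nat.sInf_le ⟨i, rfl⟩
  apply le_antisymm
  · obtain ⟨j, hj⟩ := Nat.sInf_mem (counts_nonempty xw 2 n)
    rw [m2c, ← hj, ← count_zero_factorAt_two_mul_two_mul]
    exact Nat.sInf_le ⟨2 * j, rfl⟩
  · refine le_csInf (counts_nonempty xw 0 (2 * n)) ?_
    rintro _ ⟨i, rfl⟩
    rw [count_zero_factorAt_two_mul]
    have := m2c_le (i / 2)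
    have := m2c_le ((i + 1) / 2)
    omega

theorem stmt10_general (n : ℕ) (u : List ℕ) :
    (u.count 2 = M2c n ↔ (u.flatMap phiL).count 0 = M0 (2 * n)) ∧
    (u.count 2 = m2c n ↔ (u.flatMap phiL).count 0 = m0 (2 * n)) := by
  rw [count_flatMap_phiL_zero, M0_two_mul, m0_two_mul]
  omega

theorem stmt10 (n : ℕ) (hn : 1 ≤ n) (u : List ℕ)
    (hu : IsFactor xw u) (hlen : u.length = n) :
    (u.count 2 = M2c n ↔ (u.flatMap phiL).count 0 = M0 (2 * n)) ∧
    (u.count 2 = m2c n ↔ (u.flatMap phiL).count 0 = m0 (2 * n)) :=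
  stmt10_general n u
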